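/- arXiv:1309.4786 — 2 statements merged into one kernel-verified Lean document; each statement's English description precedes it below -/
import Mathlib

section
/- Let Γ be a compact group with normalized Haar measure m, and let α₀ : Γ → Γ be a continuous surjective endomorphism with finite kernel of cardinality strictly greater than 1. Then for each n ∈ ℕ, the set Bₙ = {x ∈ Γ : α₀ⁿ(x) = x} has Haar measure zero. -/
/-!
Pick `k ≠ 1` in `ker α₀`, so that `k` is killed by `φ = α₀ⁿ` for `n > 0`. If `B` is the fixed set
of `φ`, then `B` and its translate `k • B` are disjoint, and both lie in `φ⁻¹ B`. Since `φ` preserves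
the Haar measure `m` and `m` is left invariant, `2 m(B) ≤ m(φ⁻¹ B) = m(B)`, and `m(B) < ∞` forces
`m(B) = 0`.
-/

open MeasureTheory Function Pointwise

theorem MeasureTheory.MeasurePreserving.measure_eq_zero_of_disjoint_subset_preimage
    {α : Type*} [MeasurableSpace α] {μ : Measure α} [IsFiniteMeasure μ] {f : α → α}
    (hf : MeasurePreserving f μ μ) {s t : Set α} (ht : MeasurableSet t) (hts : μ t = μ s)
    (hdisj : Disjoint s t) (hsub : s ∪ t ⊆ f ⁻¹' s) : μ s = 0 := by
  have hle : μ s + μ s ≤ μ s + 0 :=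
    calc μ s + μ s = μ (s ∪ t) := by rw [measure_union hdisj ht, hts]
      _ ≤ μ (f ⁻¹' s) := measure_mono hsub
      _ ≤ μ s := (Measure.le_map_apply hf.aemeasurable s).trans_eq (by rw [hf.map_eq])
      _ = μ s + 0 := (add_zero _).symm
  exact nonpos_iff_eq_zero.mp (ENNReal.le_of_add_le_add_left (measure_ne_top μ s) hle)

namespace MonoidHom

variable {G : Type*} [Group G] (φ : G →* G) {k : G}

theorem fixedPoints_subset_preimage : fixedPoints φ ⊆ φ ⁻¹' fixedPoints φ :=
  fun _ hx => hx.apply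

theorem smul_fixedPoints_subset_preimage (hk : φ k = 1) :
    k • fixedPoints φ ⊆ φ ⁻¹' fixedPoints φ := by
  rintro _ ⟨x, hx, rfl⟩
  change IsFixedPt φ (φ (k * x))
  rwa [map_mul, hk, one_mul, hx.eq]

theorem disjoint_fixedPoints_smul (hk : φ k = 1) (hk1 : k ≠ 1) :
    Disjoint (fixedPoints φ) (k • fixedPoints φ) := by
  rw [Set.disjoint_left]
  rintro _ hkx ⟨x, hx, rfl⟩
  have hkx : φ (k * x) = k * x := hkx
  rw [map_mul, hk, one_mul, hx.eq] at hkx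
  exact hk1 (by simpa using hkx.symm)

theorem measure_fixedPoints_eq_zero [TopologicalSpace G] [ContinuousMul G] [T2Space G]
    [MeasurableSpace G] [BorelSpace G] (μ : Measure G) [IsFiniteMeasure μ]
    [μ.IsMulLeftInvariant] (hφ : MeasurePreserving φ μ μ) (hcont : Continuous φ)
    (hk : φ k = 1) (hk1 : k ≠ 1) : μ (fixedPoints φ) = 0 :=
  hφ.measure_eq_zero_of_disjoint_subset_preimage
    ((isClosed_fixedPoints hcont).measurableSet.const_smul k) (measure_smul μ k _)
    (φ.disjoint_fixedPoints_smul hk hk1)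
    (Set.union_subset φ.fixedPoints_subset_preimage (φ.smul_fixedPoints_subset_preimage hk))

end MonoidHom

theorem iterate_map_eq_one_of_map_eq_one {M F : Type*} [Monoid M] [FunLike F M M]
    [MonoidHomClass F M M] (f : F) {k : M} (hk : f k = 1) {n : ℕ} (hn : n ≠ 0) : f^[n] k = 1 := by
  obtain ⟨j, rfl⟩ := Nat.exists_eq_succ_of_ne_zero hn
  rw [iterate_succ_apply, hk, iterate_map_one]

theorem stmt_3_general {Γ : Type*} [Group Γ] [TopologicalSpace Γ] [IsTopologicalGroup Γ]
    [CompactSpace Γ] [T2Space Γ] [MeasurableSpace Γ] [BorelSpace Γ]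
    (m : Measure Γ) [m.IsHaarMeasure]
    (α₀ : Γ →* Γ) (hcont : Continuous α₀) (hsurj : Function.Surjective α₀)
    (hcard : 1 < Nat.card α₀.ker)
    (n : ℕ) (hn : 0 < n) :
    m {x : Γ | (⇑α₀)^[n] x = x} = 0 := by
  obtain ⟨k, hk, hk1⟩ := α₀.ker.bot_or_exists_ne_one.resolve_left fun h => by
    simp [h] at hcard
  let φ : Monoid.End Γ := (show Monoid.End Γ from α₀) ^ n
  have hφ : MeasurePreserving φ m m := (α₀.measurePreserving hcont hsurj rfl).iterate n
  exact MonoidHom.measure_fixedPoints_eq_zero φ m hφ (hcont.iterate n)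
    (iterate_map_eq_one_of_map_eq_one α₀ (α₀.mem_ker.mp hk) hn.ne') hk1

theorem stmt_3 {Γ : Type*} [Group Γ] [TopologicalSpace Γ] [IsTopologicalGroup Γ]
    [CompactSpace Γ] [T2Space Γ] [MeasurableSpace Γ] [BorelSpace Γ]
    (m : Measure Γ) [m.IsHaarMeasure] (hm : m Set.univ = 1)
    (α₀ : Γ →* Γ) (hcont : Continuous α₀) (hsurj : Function.Surjective α₀)
    (hker : (α₀.ker : Set Γ).Finite) (hcard : 1 < Nat.card α₀.ker)
    (n : ℕ) (hn : 0 < n) :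
    m {x : Γ | (⇑α₀)^[n] x = x} = 0 :=
  stmt_3_general m α₀ hcont hsurj hcard n hn
end

section
/- Let Γ be a compact group and α₀ : Γ → Γ a continuous surjective endomorphism with finite kernel of cardinality strictly greater than 1. Then the set of periodic points L = {x ∈ Γ : α₀ⁿ(x) = x for some n ≥ 1} has empty interior. -/
/-!
For `n ≥ 1` the fixed points of `α₀ⁿ` form a closed subgroup `H`. If `H` had nonempty
interior it would be open, hence of finite index in the compact group `Γ`. Since `α₀ⁿ` is
surjective, `H ≤ (α₀ⁿ)⁻¹(H)` have the same finite index, so they are equal and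
`ker α₀ ≤ ker α₀ⁿ ≤ H`. But a point of `ker α₀ⁿ` fixed by `α₀ⁿ` is trivial, contradicting
`ker α₀ ≠ 1`. Thus every `Fix(α₀ⁿ)` is closed and nowhere dense, and the periodic points,
their countable union, have empty interior by the Baire category theorem.
-/

open Function

namespace Subgroup

variable {G : Type*} [Group G]

theorem comap_eq_self_of_le_comap_of_surjective {H : Subgroup G} [H.FiniteIndex] {f : G →* G}
    (hf : Surjective f) (hH : H ≤ H.comap f) : H.comap f = H :=
  (eq_of_le_of_not_lt hH fun hlt => (index_strictAnti hlt).ne (H.index_comap_of_surjective hf)).symm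

end Subgroup

theorem Monoid.End.ker_le_ker_pow {G : Type*} [Group G] (f : Monoid.End G) {n : ℕ}
    (hn : n ≠ 0) : MonoidHom.ker f ≤ MonoidHom.ker (f ^ n) := by
  intro x (hx : f x = 1)
  obtain ⟨m, rfl⟩ := Nat.exists_eq_succ_of_ne_zero hn
  show f^[m + 1] x = 1
  rw [iterate_succ_apply, hx, iterate_map_one]

namespace MonoidHom

variable {G : Type*} [Group G]

theorem ker_le_of_le_comap_of_surjective {f : G →* G} (hf : Surjective f) {H : Subgroup G}
    [H.FiniteIndex] (hH : H ≤ H.comap f) : f.ker ≤ H := by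
  rw [← H.comap_eq_self_of_le_comap_of_surjective hf hH]
  exact Subgroup.comap_mono bot_le

theorem eqLocus_id_le_comap (f : G →* G) : f.eqLocus (.id G) ≤ (f.eqLocus (.id G)).comap f :=
  fun _ hx => congrArg f hx

theorem interior_fixedPoints_eq_empty [TopologicalSpace G] [IsTopologicalGroup G] [CompactSpace G]
    {f : G →* G} (hf : Surjective f) (hker : f.ker ≠ ⊥) : interior (fixedPoints f) = ∅ := by
  by_contra hint
  obtain ⟨g, hg⟩ := Set.nonempty_iff_ne_empty.2 hint
  set H := f.eqLocus (.id G)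
  have hopen : IsOpen (H : Set G) := H.isOpen_of_mem_nhds (mem_interior_iff_mem_nhds.1 hg)
  have : Finite (G ⧸ H) := H.quotient_finite_of_isOpen hopen
  have : H.FiniteIndex := Subgroup.finiteIndex_of_finite_quotient
  refine hker (eq_bot_iff.2 fun x hx => ?_)
  have hxH : f x = x := ker_le_of_le_comap_of_surjective hf f.eqLocus_id_le_comap hx
  rw [Subgroup.mem_bot, ← hxH]
  exact hx

end MonoidHom

section Baire

variable {X : Type*} [TopologicalSpace X]

theorem IsMeagre.interior_eq_empty [BaireSpace X] {s : Set X} (hs : IsMeagre s) :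
    interior s = ∅ := by
  by_contra h
  exact not_isMeagre_of_isOpen isOpen_interior (Set.nonempty_iff_ne_empty.2 h)
    (hs.mono interior_subset)

theorem Function.interior_periodicPts_eq_empty [BaireSpace X] [T2Space X] {f : X → X}
    (hf : Continuous f) (h : ∀ n ≠ 0, interior (fixedPoints f^[n]) = ∅) :
    interior (periodicPts f) = ∅ := by
  refine IsMeagre.interior_eq_empty ?_
  rw [← bUnion_ptsOfPeriod]
  refine isMeagre_iUnion fun n => isMeagre_iUnion fun hn => ?_
  have hclosed : IsClosed (ptsOfPeriod f n) := isClosed_fixedPoints (hf.iterate n)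
  exact (hclosed.isNowhereDense_iff.2 (h n hn.ne')).isMeagre

end Baire

theorem stmt_4_general {Γ : Type*} [Group Γ] [TopologicalSpace Γ] [IsTopologicalGroup Γ]
    [CompactSpace Γ] [T2Space Γ]
    (α₀ : Γ →* Γ) (hcont : Continuous α₀) (hsurj : Function.Surjective α₀)
    (hcard : 1 < Nat.card α₀.ker) :
    interior {x : Γ | ∃ n : ℕ, 1 ≤ n ∧ (⇑α₀)^[n] x = x} = ∅ := by
  have : Finite α₀.ker := Nat.finite_of_card_ne_zero (by omega)
  have hker_ne : α₀.ker ≠ ⊥ := (Subgroup.one_lt_card_iff_ne_bot _).1 hcard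
  have hper : {x : Γ | ∃ n : ℕ, 1 ≤ n ∧ (⇑α₀)^[n] x = x} = periodicPts α₀ := by
    ext x
    simp [mem_periodicPts, Nat.one_le_iff_ne_zero, Nat.pos_iff_ne_zero, IsPeriodicPt, IsFixedPt]
  rw [hper]
  refine interior_periodicPts_eq_empty hcont fun n hn => ?_
  let β : Monoid.End Γ := α₀
  exact MonoidHom.interior_fixedPoints_eq_empty (f := β ^ n) (hsurj.iterate n)
    (ne_bot_of_le_ne_bot hker_ne (β.ker_le_ker_pow hn))

theorem stmt_4 {Γ : Type*} [Group Γ] [TopologicalSpace Γ] [IsTopologicalGroup Γ]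
    [CompactSpace Γ] [T2Space Γ] [SecondCountableTopology Γ]
    (α₀ : Γ →* Γ) (hcont : Continuous α₀) (hsurj : Function.Surjective α₀)
    (hker : (α₀.ker : Set Γ).Finite) (hcard : 1 < Nat.card α₀.ker) :
    interior {x : Γ | ∃ n : ℕ, 1 ≤ n ∧ (⇑α₀)^[n] x = x} = ∅ :=
  stmt_4_general α₀ hcont hsurj hcard
end
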